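/- arXiv:2409.00688 — 3 statements merged into one kernel-verified Lean document; each statement's English description precedes it below -/
import Mathlib

section
/- In a sequence of connected graphs on a fixed vertex set V of size n, if initially one vertex holds a token value and at each step every vertex updates its value to the minimum of its own value and its neighbors' values, then after n-1 steps every vertex holds the global minimum of the initial values. -/
/-- In a sequence of connected graphs on a fixed vertex set `V` of size `n`, if initially
each vertex holds a value and at each step every vertex updates its value to the minimum of
its own value and its neighbors' values, then after `n - 1` steps every vertex holds the
global minimum of the initial values. -/
theorem min_spread_in_connected_dynamic_network
    {V : Type} [Fintype V] [DecidableEq V]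
    (hne : (Finset.univ : Finset V).Nonempty)
    (G : ℕ → SimpleGraph V) [∀ t, DecidableRel (G t).Adj]
    (hconn : ∀ t, 1 ≤ t → (G t).Connected)
    (f : ℕ → V → ℕ)
    (hstep : ∀ t v, f (t + 1) v =
      (insert v ((G (t + 1)).neighborFinset v)).inf' (Finset.insert_nonempty _ _) (f t)) :
    ∀ v, f (Fintype.card V - 1) v = Finset.univ.inf' hne (f 0) := by
  classical
  set m := Finset.univ.inf' hne (f 0) with hm
  have hlb : ∀ t v, m ≤ f t v := by
    intro t
    induction t with
    | zero => intro v; exact Finset.inf'_le _ (Finset.mem_univ v)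
    | succ t ih =>
      intro v
      rw [hstep]
      exact Finset.le_inf' _ _ fun u _ => ih u
  have hmono : ∀ t v, f (t + 1) v ≤ f t v := by
    intro t v; rw [hstep]
    exact Finset.inf'_le _ (Finset.mem_insert_self v _)
  have hadj : ∀ t u v, (G (t + 1)).Adj v u → f (t + 1) v ≤ f t u := by
    intro t u v h
    rw [hstep]
    exact Finset.inf'_le _
      (Finset.mem_insert_of_mem (((G (t + 1)).mem_neighborFinset v u).mpr h))
  let A : ℕ → Finset V := fun t => Finset.univ.filter (fun v => f t v = m)
  have hmemA : ∀ t v, v ∈ A t ↔ f t v = m := by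
    intro t v; simp [A]
  have hA0 : (A 0).Nonempty := by
    obtain ⟨v, _, hve⟩ := Finset.exists_mem_eq_inf' hne (f 0)
    exact ⟨v, (hmemA 0 v).mpr hve.symm⟩
  have hsub : ∀ t, A t ⊆ A (t + 1) := by
    intro t v hv
    rw [hmemA] at hv ⊢
    exact le_antisymm (hv ▸ hmono t v) (hlb _ v)
  have hAne : ∀ t, (A t).Nonempty := by
    intro t
    induction t with
    | zero => exact hA0
    | succ t ih => exact ih.mono (hsub t)
  have hgrow : ∀ t, A t ≠ Finset.univ → A t ⊂ A (t + 1) := by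
    intro t hnu
    refine (Finset.ssubset_iff_of_subset (hsub t)).mpr ?_
    obtain ⟨a, ha⟩ := hAne t
    obtain ⟨b, hb⟩ : ∃ b, b ∉ A t := by
      by_contra h
      push_neg at h
      exact hnu (Finset.eq_univ_iff_forall.mpr h)
    obtain ⟨p⟩ := ((hconn (t + 1) (by omega)).preconnected a b)
    obtain ⟨d, _, hd1, hd2⟩ := p.exists_boundary_dart (↑(A t) : Set V)
      (by simpa using ha) (by simpa using hb)
    refine ⟨d.snd, ?_, by simpa using hd2⟩
    rw [hmemA]
    refine le_antisymm ?_ (hlb _ _)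
    have := hadj t d.fst d.snd d.adj.symm
    have hfst : f t d.fst = m := (hmemA t d.fst).mp (by simpa using hd1)
    omega
  have hcard : ∀ t, t + 1 ≤ (A t).card ∨ A t = Finset.univ := by
    intro t
    induction t with
    | zero => exact Or.inl (Finset.card_pos.mpr hA0)
    | succ t ih =>
      rcases ih with h | h
      · by_cases hu : A t = Finset.univ
        · exact Or.inr (Finset.eq_univ_iff_forall.mpr fun v =>
            hsub t (hu ▸ Finset.mem_univ v))
        · have := Finset.card_lt_card (hgrow t hu)
          exact Or.inl (by omega)
      · exact Or.inr (Finset.eq_univ_iff_forall.mpr fun v =>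
          hsub t (h ▸ Finset.mem_univ v))
  have hn : 1 ≤ Fintype.card V := Fintype.card_pos_iff.mpr ⟨hne.choose⟩
  have hfinal : A (Fintype.card V - 1) = Finset.univ := by
    rcases hcard (Fintype.card V - 1) with h | h
    · apply Finset.eq_univ_of_card
      have hle := Finset.card_le_univ (A (Fintype.card V - 1))
      omega
    · exact h
  intro v
  exact (hmemA _ v).mp (hfinal ▸ Finset.mem_univ v)
end

section
/- If every agent's view contains a given cut C as a counting cut (each node of C has a unique child in that view), then C is also a counting cut in the union (match-and-merge) of all the views; in abstract terms: if C is a cut of each tree T_i in a finite family of subtrees of a common tree T, each T_i containing all of T's children of nodes of C, and every leaf of T lies in some T_i, then C is a cut of T in which every node of C has a unique child. -/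
/-- A finite rooted tree, given by a root and a parent function under which every node
eventually reaches the root. -/
structure FRT (α : Type) where
  root : α
  parent : α → α
  parent_root : parent root = root
  reaches_root : ∀ v : α, ∃ k : ℕ, parent^[k] v = root

/-- `v` is an ancestor of `w` (possibly `v = w`). -/
def FRT.Anc {α : Type} (T : FRT α) (v w : α) : Prop := ∃ k : ℕ, T.parent^[k] w = v

/-- `v` is a proper ancestor of `w`. -/
def FRT.PAnc {α : Type} (T : FRT α) (v w : α) : Prop := v ≠ w ∧ T.Anc v w

/-- A leaf of the whole tree. -/
def FRT.IsLeaf {α : Type} (T : FRT α) (f : α) : Prop := ∀ w, T.parent w = f → w = f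

/-- A leaf relative to a subtree `S`: a node of `S` with no children inside `S`. -/
def FRT.IsLeafIn {α : Type} (T : FRT α) (S : Set α) (f : α) : Prop :=
  f ∈ S ∧ ∀ w ∈ S, T.parent w = f → w = f

/-- `S` is a subtree: it contains the root and is closed under taking parents. -/
def FRT.IsSubtree {α : Type} (T : FRT α) (S : Set α) : Prop :=
  T.root ∈ S ∧ ∀ v ∈ S, T.parent v ∈ S

section Aux

attribute [local instance] Classical.propDecidable

variable {α : Type} (T : FRT α)

lemma FRT.anc_trans {u v w : α} (h1 : T.Anc u v) (h2 : T.Anc v w) : T.Anc u w := by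
  obtain ⟨k1, h1⟩ := h1; obtain ⟨k2, h2⟩ := h2
  exact ⟨k1 + k2, by rw [Function.iterate_add_apply, h2, h1]⟩

lemma FRT.mem_of_anc {S : Set α} (hS : ∀ v ∈ S, T.parent v ∈ S) {v w : α}
    (h : T.Anc v w) (hw : w ∈ S) : v ∈ S := by
  obtain ⟨k, hk⟩ := h
  subst hk
  induction k with
  | zero => exact hw
  | succ n ih => rw [Function.iterate_succ_apply']; exact hS _ ih

noncomputable def FRT.depth (v : α) : ℕ := Nat.find (T.reaches_root v)

lemma FRT.depth_spec (v : α) : T.parent^[T.depth v] v = T.root :=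
  Nat.find_spec (T.reaches_root v)

lemma FRT.depth_le {v : α} {k : ℕ} (h : T.parent^[k] v = T.root) : T.depth v ≤ k :=
  Nat.find_min' (T.reaches_root v) h

lemma FRT.depth_lt_card [Fintype α] (v : α) : T.depth v < Fintype.card α := by
  have key : ∀ a b, a < b → b < T.depth v + 1 → T.parent^[a] v = T.parent^[b] v → False := by
    intro a b h hb hab
    have key2 : T.parent^[T.depth v - (b - a)] v = T.root := by
      have e : T.depth v - (b - a) = (T.depth v - b) + a := by omega
      rw [e, Function.iterate_add_apply, hab, ← Function.iterate_add_apply]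
      have e2 : T.depth v - b + b = T.depth v := by omega
      rw [e2]; exact T.depth_spec v
    have := T.depth_le key2; omega
  have hinj : Set.InjOn (fun j => T.parent^[j] v) (Finset.range (T.depth v + 1)) := by
    intro a ha b hb hab
    simp only at hab
    simp only [Finset.coe_range, Set.mem_Iio] at ha hb
    by_contra hne
    rcases lt_or_gt_of_ne hne with h | h
    · exact key a b h hb hab
    · exact key b a h ha hab.symm
  have := Finset.card_le_card_of_injOn (fun j => T.parent^[j] v)
    (fun _ _ => Finset.mem_univ _) hinj
  simpa [Finset.card_range] using this

lemma FRT.depth_lt_of_child {v w : α} (hp : T.parent w = v) (hne : w ≠ v) :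
    T.depth v < T.depth w := by
  have hwroot : w ≠ T.root := by
    intro h; subst h; exact hne (by rw [← hp, T.parent_root])
  have hd1 : 1 ≤ T.depth w := by
    rcases Nat.eq_zero_or_pos (T.depth w) with h | h
    · exact absurd (by simpa [h] using T.depth_spec w) hwroot
    · exact h
  have : T.parent^[T.depth w - 1] v = T.root := by
    have := T.depth_spec w
    rw [show T.depth w = (T.depth w - 1) + 1 by omega] at this
    rwa [Function.iterate_add_apply, Function.iterate_one, hp] at this
  have := T.depth_le this
  omega

lemma FRT.exists_leaf_desc [Fintype α] (u : α) : ∃ f, T.IsLeaf f ∧ T.Anc u f := by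
  suffices h : ∀ n u, Fintype.card α - T.depth u ≤ n → ∃ f, T.IsLeaf f ∧ T.Anc u f from
    h (Fintype.card α) u (by omega)
  intro n
  induction n with
  | zero => intro u hu; have := T.depth_lt_card u; omega
  | succ n ih =>
    intro u hu
    by_cases hleaf : T.IsLeaf u
    · exact ⟨u, hleaf, 0, rfl⟩
    · simp only [FRT.IsLeaf, not_forall] at hleaf
      obtain ⟨w, hw, hne⟩ := hleaf
      have hd := T.depth_lt_of_child hw hne
      obtain ⟨f, hf, hanc⟩ := ih w (by have := T.depth_lt_card w; omega)
      exact ⟨f, hf, T.anc_trans ⟨1, by simpa using hw⟩ hanc⟩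

end Aux

/-- Let `T` be a finite rooted tree and `S 1, …, S m` rooted subtrees of `T` whose union
covers all leaves of `T`. Let `C` be a set of nodes such that (i) for each `i`, `C ∩ S i`
meets every root-to-leaf path of `S i` exactly once, and (ii) every node of `C` has exactly
one child in each `S i` containing it, and these children coincide in `T`. Then `C` meets
every root-to-leaf path of `T` exactly once, and every node of `C` has a unique child
in `T`. -/
theorem counting_cut_of_merged_views
    {α : Type} [Fintype α] (T : FRT α) (m : ℕ) (S : Fin m → Set α)
    (hsub : ∀ i, T.IsSubtree (S i))
    (hcover : ∀ f, T.IsLeaf f → ∃ i, f ∈ S i)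
    (C : Set α)
    (hcut : ∀ i, ∀ f, T.IsLeafIn (S i) f → ∃! v, v ∈ C ∩ S i ∧ T.Anc v f)
    (hchild : ∀ v ∈ C, ∃ w, T.parent w = v ∧ w ≠ v ∧
      (∀ i, v ∈ S i → w ∈ S i) ∧
      (∀ i, ∀ u ∈ S i, T.parent u = v → u ≠ v → u = w)) :
    (∀ f, T.IsLeaf f → ∃! v, v ∈ C ∧ T.Anc v f) ∧
    (∀ v ∈ C, ∃! w, T.parent w = v ∧ w ≠ v) := by
  constructor
  · intro f hf
    obtain ⟨i, hfi⟩ := hcover f hf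
    have hleafin : T.IsLeafIn (S i) f := ⟨hfi, fun w _ hw => hf w hw⟩
    obtain ⟨v, ⟨⟨hvC, hvS⟩, hvanc⟩, huniq⟩ := hcut i f hleafin
    refine ⟨v, ⟨hvC, hvanc⟩, ?_⟩
    intro v' ⟨hv'C, hv'anc⟩
    exact huniq v' ⟨⟨hv'C, T.mem_of_anc (hsub i).2 hv'anc hfi⟩, hv'anc⟩
  · intro v hv
    obtain ⟨w, hpw, hwne, _, huniq⟩ := hchild v hv
    refine ⟨w, ⟨hpw, hwne⟩, ?_⟩
    rintro u ⟨hpu, hune⟩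
    obtain ⟨f, hf, hanc⟩ := T.exists_leaf_desc u
    obtain ⟨j, hfj⟩ := hcover f hf
    have huj : u ∈ S j := T.mem_of_anc (hsub j).2 hanc hfj
    exact huniq j u huj hpu hune
end

section
/- In a rooted tree T' extending T by only adding nodes (no deletions), if a cut C of T ceases to be a cut-with-unique-children in T', then either some node of C has more than one child in T', or T' has a root-to-leaf path avoiding C; in both cases T' has strictly more leaves than T restricted appropriately—i.e., losing a counting cut forces a branching. -/
namespace FRT
variable {α : Type} (T : FRT α)

lemma anc_refl (v : α) : T.Anc v v := ⟨0, rfl⟩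

lemma anc_trans_s17 {a b c : α} (h1 : T.Anc a b) (h2 : T.Anc b c) : T.Anc a c := by
  obtain ⟨m, hm⟩ := h1; obtain ⟨k, hk⟩ := h2
  exact ⟨m + k, by rw [Function.iterate_add_apply, hk, hm]⟩

lemma anc_total {a b w : α} (h1 : T.Anc a w) (h2 : T.Anc b w) : T.Anc a b ∨ T.Anc b a := by
  obtain ⟨m, hm⟩ := h1; obtain ⟨k, hk⟩ := h2
  rcases le_total m k with h | h
  · right
    exact ⟨k - m, by rw [← hm, ← Function.iterate_add_apply, Nat.sub_add_cancel h]; exact hk⟩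
  · left
    exact ⟨m - k, by rw [← hk, ← Function.iterate_add_apply, Nat.sub_add_cancel h]; exact hm⟩

lemma iter_mem {S : Set α} (hS : T.IsSubtree S) {v : α} (hv : v ∈ S) (k : ℕ) :
    T.parent^[k] v ∈ S := by
  induction k with
  | zero => exact hv
  | succ n ih => rw [Function.iterate_succ_apply']; exact hS.2 _ ih

lemma anc_mem {S : Set α} (hS : T.IsSubtree S) {v w : α} (hv : v ∈ S) (h : T.Anc w v) :
    w ∈ S := by
  obtain ⟨k, hk⟩ := h; rw [← hk]; exact T.iter_mem hS hv k

lemma leafIn_no_desc {S : Set α} (hS : T.IsSubtree S) {f v : α} (hf : T.IsLeafIn S f)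
    (hv : v ∈ S) (h : T.Anc f v) : v = f := by
  obtain ⟨k, hk⟩ := h
  induction k generalizing v with
  | zero => exact hk
  | succ n ih =>
    rw [Function.iterate_succ_apply] at hk
    exact hf.2 v hv (ih (hS.2 _ hv) hk)

noncomputable def depth_s17 (v : α) : ℕ := sInf {k | T.parent^[k] v = T.root}

lemma depth_spec_s17 (v : α) : T.parent^[T.depth_s17 v] v = T.root :=
  Nat.sInf_mem (T.reaches_root v)

lemma exists_desc_leaf [Fintype α] (v : α) : ∃ f : α, T.IsLeaf f ∧ T.Anc v f := by
  obtain ⟨f, hf, hmax⟩ := Finset.exists_max_image (Set.toFinite {w | T.Anc v w}).toFinset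
    T.depth_s17 ⟨v, (Set.Finite.mem_toFinset _).2 (T.anc_refl v)⟩
  rw [Set.Finite.mem_toFinset] at hf
  refine ⟨f, ?_, hf⟩
  intro u hu
  by_contra huf
  have huroot : u ≠ T.root := by
    intro h
    apply huf
    rw [h] at hu ⊢
    rw [T.parent_root] at hu
    exact hu
  have hanc : T.Anc v u := T.anc_trans_s17 hf ⟨1, by simpa using hu⟩
  have hu' := hmax u ((Set.Finite.mem_toFinset _).2 hanc)
  have h1 : 1 ≤ T.depth_s17 u := by
    rcases Nat.eq_zero_or_pos (T.depth_s17 u) with h | h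
    · exact absurd (by simpa [h] using T.depth_spec_s17 u) huroot
    · exact h
  have hstep : T.parent^[T.depth_s17 u - 1] f = T.root := by
    rw [← hu, ← Function.iterate_succ_apply, Nat.succ_eq_add_one, Nat.sub_add_cancel h1]
    exact T.depth_spec_s17 u
  have hdf : T.depth_s17 f ≤ T.depth_s17 u - 1 := Nat.sInf_le hstep
  omega

end FRT

/-- Losing a counting cut forces a branching. Let `T'` be a finite rooted tree and `S` an
initial (parent-closed) subtree representing the old tree. Suppose `C ⊆ S` meets every
root-to-leaf path of `S` exactly once and each node of `C` has exactly one child in `S`.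
If in the full tree some node of `C` has at least two children, or some root-to-leaf path
of the full tree avoids `C`, then the full tree has strictly more leaves than `S`. -/
theorem losing_counting_cut_forces_branching
    {α : Type} [Fintype α] (T : FRT α) (S : Set α)
    (hS : T.IsSubtree S) (C : Set α) (hCS : C ⊆ S)
    (hcut : ∀ f, T.IsLeafIn S f → ∃! v, v ∈ C ∧ T.Anc v f)
    (hchild : ∀ v ∈ C, ∃! w, w ∈ S ∧ T.parent w = v ∧ w ≠ v)
    (hloss : (∃ v ∈ C, ∃ w1 w2 : α, w1 ≠ w2 ∧ T.parent w1 = v ∧ T.parent w2 = v ∧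
        w1 ≠ v ∧ w2 ≠ v) ∨
      (∃ f, T.IsLeaf f ∧ ∀ v ∈ C, ¬ T.Anc v f)) :
    {f | T.IsLeafIn S f}.ncard < {f | T.IsLeaf f}.ncard := by
  classical
  set LS : Set α := {f | T.IsLeafIn S f} with hLS
  set L : Set α := {f | T.IsLeaf f} with hL
  choose φ hφleaf hφanc using T.exists_desc_leaf
  have hmaps : ∀ f ∈ LS, φ f ∈ L := fun f _ => hφleaf f
  have hinj : Set.InjOn φ LS := by
    intro f1 h1 f2 h2 heq
    have hcomp := T.anc_total (hφanc f1) (heq ▸ hφanc f2)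
    rcases hcomp with h | h
    · exact (T.leafIn_no_desc hS h1 h2.1 h).symm
    · exact T.leafIn_no_desc hS h2 h1.1 h
  -- find a leaf outside the image
  have hout : ∃ g, g ∈ L ∧ g ∉ φ '' LS := by
    rcases hloss with ⟨v, hvC, w1, w2, hne, hp1, hp2, hv1, hv2⟩ | ⟨f, hfleaf, hfav⟩
    · -- some wi is not in S
      have hwS : w1 ∉ S ∨ w2 ∉ S := by
        by_contra h
        push_neg at h
        obtain ⟨u, _, huniq⟩ := hchild v hvC
        exact hne ((huniq w1 ⟨h.1, hp1, hv1⟩).trans (huniq w2 ⟨h.2, hp2, hv2⟩).symm)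
      obtain ⟨w, hpw, hwv, hwnS⟩ : ∃ w, T.parent w = v ∧ w ≠ v ∧ w ∉ S := by
        rcases hwS with h | h
        · exact ⟨w1, hp1, hv1, h⟩
        · exact ⟨w2, hp2, hv2, h⟩
      refine ⟨φ w, hφleaf w, ?_⟩
      rintro ⟨f', hf', heq⟩
      have hcomp := T.anc_total (hφanc f') (heq ▸ hφanc w)
      rcases hcomp with h | h
      · -- Anc f' w
        obtain ⟨k, hk⟩ := h
        cases k with
        | zero =>
          simp only [Function.iterate_zero, id_eq] at hk
          exact hwnS (hk ▸ hf'.1)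
        | succ n =>
          rw [Function.iterate_succ_apply, hpw] at hk
          have hvf : v = f' := T.leafIn_no_desc hS hf' (hCS hvC) ⟨n, hk⟩
          obtain ⟨u, ⟨huS, hup, huv⟩, _⟩ := hchild v hvC
          exact huv (hf'.2 u huS (hvf ▸ hup) |>.trans hvf.symm)
      · -- Anc w f' : then w ∈ S
        exact hwnS (T.anc_mem hS hf'.1 h)
    · refine ⟨f, hfleaf, ?_⟩
      rintro ⟨f', hf', heq⟩
      obtain ⟨v, ⟨hvC, hvanc⟩, _⟩ := hcut f' hf'
      exact hfav v hvC (T.anc_trans_s17 hvanc (heq ▸ hφanc f'))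
  obtain ⟨g, hgL, hgim⟩ := hout
  have hss : φ '' LS ⊂ L := ⟨Set.image_subset_iff.2 hmaps, fun h => hgim (h hgL)⟩
  calc LS.ncard = (φ '' LS).ncard := (Set.ncard_image_of_injOn hinj).symm
    _ < L.ncard := Set.ncard_lt_ncard hss (Set.toFinite L)
end
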